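/- arXiv:2604.00932 — 4 statements merged into one kernel-verified Lean document; each statement's English description precedes it below -/
import Mathlib

section
/- For any real numbers $v_0, v_1, \dots, v_n$ and any $x \in \{0,1\}^n$, the inequality $\sum_{1\le i<j\le n} \lceil 2 v_i v_j \rceil x_i x_j + \sum_{i=1}^n \lceil v_i^2 + 2 v_i v_0 \rceil x_i + \lfloor v_0^2 \rfloor \ge 0$ holds. -/
open Finset in
lemma sum_exists_int_cast {α : Type*} (s : Finset α) (f : α → ℝ)
    (h : ∀ a ∈ s, ∃ k : ℤ, f a = (k : ℝ)) : ∃ k : ℤ, ∑ a ∈ s, f a = (k : ℝ) := by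
  classical
  induction s using Finset.induction with
  | empty => exact ⟨0, by simp⟩
  | insert _ _ ha ih =>
    obtain ⟨k, hk⟩ := h _ (Finset.mem_insert_self _ _)
    obtain ⟨K, hK⟩ := ih (fun b hb => h b (Finset.mem_insert_of_mem hb))
    exact ⟨k + K, by rw [Finset.sum_insert ha, hk, hK]; push_cast; ring⟩

open Finset in
lemma sq_sum_eq_offdiag (n : ℕ) (w : Fin n → ℝ) :
    (∑ i, w i) ^ 2
      = (∑ p ∈ Finset.univ.filter (fun p : Fin n × Fin n => p.1 < p.2),
          2 * w p.1 * w p.2) + ∑ i, (w i) ^ 2 := by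
  have h : (∑ i, w i) ^ 2 = ∑ p ∈ (univ : Finset (Fin n × Fin n)), w p.1 * w p.2 := by
    rw [sq, Finset.sum_mul_sum, ← Finset.sum_product', Finset.univ_product_univ]
  rw [h, ← Finset.sum_filter_add_sum_filter_not (univ : Finset (Fin n × Fin n))
    (fun p => p.1 < p.2)]
  have h2 : (univ : Finset (Fin n × Fin n)).filter (fun p => ¬ p.1 < p.2)
      = ((univ : Finset (Fin n × Fin n)).filter (fun p => p.2 < p.1)) ∪
        ((univ : Finset (Fin n × Fin n)).filter (fun p => p.1 = p.2)) := by
    ext p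
    simp only [Finset.mem_filter, Finset.mem_union, Finset.mem_univ, true_and, not_lt]
    omega
  have hdisj : Disjoint
      ((univ : Finset (Fin n × Fin n)).filter (fun p => p.2 < p.1))
      ((univ : Finset (Fin n × Fin n)).filter (fun p => p.1 = p.2)) := by
    simp only [Finset.disjoint_filter]
    intro p _ h1 h2
    omega
  rw [h2, Finset.sum_union hdisj]
  have hswap : ∑ p ∈ (univ : Finset (Fin n × Fin n)).filter (fun p => p.2 < p.1),
      w p.1 * w p.2
      = ∑ p ∈ (univ : Finset (Fin n × Fin n)).filter (fun p => p.1 < p.2),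
      w p.1 * w p.2 := by
    apply Finset.sum_nbij' (fun p => (p.2, p.1)) (fun p => (p.2, p.1)) <;>
      simp [mul_comm]
  have hdiag : ∑ p ∈ (univ : Finset (Fin n × Fin n)).filter (fun p => p.1 = p.2),
      w p.1 * w p.2 = ∑ i, (w i) ^ 2 := by
    rw [Finset.sum_filter, ← Finset.univ_product_univ, Finset.sum_product]
    simp [sq]
  rw [hswap, hdiag]
  have : ∑ p ∈ (univ : Finset (Fin n × Fin n)).filter (fun p => p.1 < p.2),
      2 * w p.1 * w p.2
      = 2 * ∑ p ∈ (univ : Finset (Fin n × Fin n)).filter (fun p => p.1 < p.2),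
      w p.1 * w p.2 := by
    rw [Finset.mul_sum]; exact Finset.sum_congr rfl (fun p _ => by ring)
  rw [this]; ring

open Finset in
theorem eigen_cg_valid_binary (n : ℕ) (v0 : ℝ) (v : Fin n → ℝ)
    (x : Fin n → ℝ) (hx : ∀ i, x i = 0 ∨ x i = 1) :
    0 ≤ (∑ p ∈ Finset.univ.filter (fun p : Fin n × Fin n => p.1 < p.2),
          ((⌈2 * v p.1 * v p.2⌉ : ℝ)) * x p.1 * x p.2)
      + (∑ i, ((⌈(v i) ^ 2 + 2 * v i * v0⌉ : ℝ)) * x i)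
      + (⌊v0 ^ 2⌋ : ℝ) := by
  set S : ℝ := (∑ p ∈ Finset.univ.filter (fun p : Fin n × Fin n => p.1 < p.2),
          ((⌈2 * v p.1 * v p.2⌉ : ℝ)) * x p.1 * x p.2)
      + (∑ i, ((⌈(v i) ^ 2 + 2 * v i * v0⌉ : ℝ)) * x i) with hS
  -- S is an integer
  have hint : ∃ m : ℤ, S = (m : ℝ) := by
    obtain ⟨k1, hk1⟩ := sum_exists_int_cast
      (Finset.univ.filter (fun p : Fin n × Fin n => p.1 < p.2))
      (fun p => ((⌈2 * v p.1 * v p.2⌉ : ℝ)) * x p.1 * x p.2)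
      (by
        intro p _
        rcases hx p.1 with h | h <;> rcases hx p.2 with h' | h'
        · exact ⟨0, by simp [h, h']⟩
        · exact ⟨0, by simp [h, h']⟩
        · exact ⟨0, by simp [h, h']⟩
        · exact ⟨⌈2 * v p.1 * v p.2⌉, by simp [h, h']⟩)
    obtain ⟨k2, hk2⟩ := sum_exists_int_cast (Finset.univ : Finset (Fin n))
      (fun i => ((⌈(v i) ^ 2 + 2 * v i * v0⌉ : ℝ)) * x i)
      (by
        intro i _
        rcases hx i with h | h
        · exact ⟨0, by simp [h]⟩
        · exact ⟨⌈(v i) ^ 2 + 2 * v i * v0⌉, by simp [h]⟩)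
    exact ⟨k1 + k2, by rw [hS, hk1, hk2]; push_cast; ring⟩
  obtain ⟨m, hm⟩ := hint
  have hxsq : ∀ i, (x i) ^ 2 = x i := by
    intro i; rcases hx i with h | h <;> simp [h]
  have hxnn : ∀ i, 0 ≤ x i := by
    intro i; rcases hx i with h | h <;> simp [h]
  -- expansion identity
  have hexp : (v0 + ∑ i, v i * x i) ^ 2 - v0 ^ 2
      = (∑ p ∈ Finset.univ.filter (fun p : Fin n × Fin n => p.1 < p.2),
          (2 * v p.1 * v p.2) * x p.1 * x p.2)
        + ∑ i, ((v i) ^ 2 + 2 * v i * v0) * x i := by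
    have hsq := sq_sum_eq_offdiag n (fun i => v i * x i)
    have e1 : ∑ p ∈ Finset.univ.filter (fun p : Fin n × Fin n => p.1 < p.2),
        2 * (v p.1 * x p.1) * (v p.2 * x p.2)
        = ∑ p ∈ Finset.univ.filter (fun p : Fin n × Fin n => p.1 < p.2),
        (2 * v p.1 * v p.2) * x p.1 * x p.2 :=
      Finset.sum_congr rfl (fun p _ => by ring)
    have e2 : ∑ i, ((v i) ^ 2 + 2 * v i * v0) * x i
        = (∑ i, (v i * x i) ^ 2) + 2 * v0 * ∑ i, v i * x i := by
      rw [Finset.mul_sum, ← Finset.sum_add_distrib]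
      refine Finset.sum_congr rfl (fun i _ => ?_)
      have := hxsq i
      nlinarith [hxsq i]
    rw [add_sq, hsq, e1, e2]
    ring
  have hkey : (v0 + ∑ i, v i * x i) ^ 2 - v0 ^ 2 ≤ S := by
    rw [hexp, hS]
    apply add_le_add
    · refine Finset.sum_le_sum (fun p _ => ?_)
      exact mul_le_mul_of_nonneg_right
        (mul_le_mul_of_nonneg_right (Int.le_ceil _) (hxnn p.1)) (hxnn p.2)
    · exact Finset.sum_le_sum (fun i _ =>
        mul_le_mul_of_nonneg_right (Int.le_ceil _) (hxnn i))
  have hlb : -(v0 ^ 2) ≤ (m : ℝ) := by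
    rw [← hm]
    nlinarith [sq_nonneg (v0 + ∑ i, v i * x i)]
  have h1 : -⌊v0 ^ 2⌋ ≤ m := by
    have h2 : (⌈-(v0 ^ 2)⌉ : ℤ) ≤ m := Int.ceil_le.mpr hlb
    rwa [Int.ceil_neg] at h2
  rw [hm]
  have h3 : (0 : ℝ) ≤ (m : ℝ) + (⌊v0 ^ 2⌋ : ℝ) := by
    have h' : (0 : ℤ) ≤ m + ⌊v0 ^ 2⌋ := by omega
    exact_mod_cast h'
  linarith
end

section
/- Let $n \ge 1$, let $v \in \mathbb{R}^n$ be nonzero and $v_0 \in \mathbb{R}$. Suppose $v_i^2 \in \mathbb{Z}$ for all $i$, $2 v_i v_j \in \mathbb{Z}$ for all $i \neq j$, and $2 v_i v_0 \in \mathbb{Z}$ for all $i$. Then there exists $p \in \mathbb{R}$ with $p \neq 0$, $p^2 \in \mathbb{Z}$, $2 v_0 p \in \mathbb{Z}$, and $v_i / p \in \mathbb{Z}$ for all $i$. -/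
theorem exists_common_divisor_p (n : ℕ) (hn : 1 ≤ n) (v : Fin n → ℝ) (v0 : ℝ)
    (hv : v ≠ 0)
    (hsq : ∀ i, ∃ m : ℤ, (v i) ^ 2 = m)
    (hprod : ∀ i j, i ≠ j → ∃ m : ℤ, 2 * v i * v j = m)
    (hv0 : ∀ i, ∃ m : ℤ, 2 * v i * v0 = m) :
    ∃ p : ℝ, p ≠ 0 ∧ (∃ m : ℤ, p ^ 2 = m) ∧ (∃ m : ℤ, 2 * v0 * p = m) ∧
      ∀ i, ∃ m : ℤ, v i / p = m := by
  -- the subgroup of integers in ℝ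
  set Z : AddSubgroup ℝ := AddSubgroup.zmultiples (1 : ℝ) with hZ
  have hZmem : ∀ x : ℝ, x ∈ Z ↔ ∃ m : ℤ, (m : ℝ) = x := by
    intro x
    rw [hZ, AddSubgroup.mem_zmultiples_iff]
    simp [zsmul_eq_mul]
  -- base: all products 2 v i v j are integers
  have hbase : ∀ i j, ∃ m : ℤ, 2 * v i * v j = m := by
    intro i j
    by_cases h : i = j
    · obtain ⟨m, hm⟩ := hsq i
      exact ⟨2 * m, by push_cast; rw [← h]; nlinarith [hm]⟩
    · exact hprod i j h
  set G : AddSubgroup ℝ := AddSubgroup.closure (Set.range v) with hG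
  -- stage 1: for x ∈ G, 2 x (v j) ∈ Z
  have h1 : ∀ j, ∀ x ∈ G, (2 * x * v j) ∈ Z := by
    intro j
    have : G ≤ Z.comap ((AddMonoidHom.mulRight (v j)).comp (AddMonoidHom.mulLeft 2)) := by
      rw [hG, AddSubgroup.closure_le]
      rintro x ⟨i, rfl⟩
      show (2 * v i * v j) ∈ Z
      rw [hZmem]
      obtain ⟨m, hm⟩ := hbase i j
      exact ⟨m, hm.symm⟩
    intro x hx
    exact this hx
  -- stage 2 : for x, y ∈ G, 2 x y ∈ Z
  have h2 : ∀ x ∈ G, ∀ y ∈ G, (2 * x * y) ∈ Z := by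
    intro x hx
    have : G ≤ Z.comap (AddMonoidHom.mulLeft (2 * x)) := by
      rw [hG, AddSubgroup.closure_le]
      rintro y ⟨j, rfl⟩
      show (2 * x * v j) ∈ Z
      have := h1 j x hx
      rw [hZmem] at this ⊢
      obtain ⟨m, hm⟩ := this
      exact ⟨m, hm⟩
    intro y hy
    exact this hy
  -- squares of elements of G are integers
  have hB : ∀ x ∈ G, x ^ 2 ∈ Z := by
    intro x hx
    rw [hG] at hx
    induction hx using AddSubgroup.closure_induction with
    | mem x hx =>
      obtain ⟨i, rfl⟩ := hx
      rw [hZmem]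
      obtain ⟨m, hm⟩ := hsq i
      exact ⟨m, hm.symm⟩
    | zero => rw [hZmem]; exact ⟨0, by simp⟩
    | add x y hx hy px py =>
      have hxy := h2 x (by rw [hG]; exact hx) y (by rw [hG]; exact hy)
      have : (x + y) ^ 2 = x ^ 2 + (2 * x * y + y ^ 2) := by ring
      rw [this]
      exact Z.add_mem px (Z.add_mem hxy py)
    | neg x hx px => simpa using px
  -- 2 v0 x ∈ Z for x ∈ G
  have hC : ∀ x ∈ G, (2 * v0 * x) ∈ Z := by
    have : G ≤ Z.comap (AddMonoidHom.mulLeft (2 * v0)) := by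
      rw [hG, AddSubgroup.closure_le]
      rintro y ⟨j, rfl⟩
      show (2 * v0 * v j) ∈ Z
      rw [hZmem]
      obtain ⟨m, hm⟩ := hv0 j
      exact ⟨m, by rw [← hm]; ring⟩
    intro x hx
    exact this hx
  -- pick k with v k ≠ 0
  obtain ⟨k, hk⟩ : ∃ k, v k ≠ 0 := Function.ne_iff.mp hv
  obtain ⟨mk, hmk⟩ := hsq k
  have hmkpos : (0 : ℝ) < mk := by
    rw [← hmk]
    exact lt_of_le_of_ne (sq_nonneg _) (Ne.symm (pow_ne_zero 2 hk))
  have h2mk : (2 : ℝ) * mk ≠ 0 := ne_of_gt (by linarith)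
  set u : ℝ := v k / (2 * mk) with hu
  have hune : u ≠ 0 := div_ne_zero hk h2mk
  -- G ≤ zmultiples u
  have hGu : G ≤ AddSubgroup.zmultiples u := by
    rw [hG, AddSubgroup.closure_le]
    rintro x ⟨i, rfl⟩
    obtain ⟨a, ha⟩ := hbase i k
    refine AddSubgroup.mem_zmultiples_iff.mpr ⟨a, ?_⟩
    rw [zsmul_eq_mul, hu]
    have key : (a : ℝ) * v k = v i * (2 * mk) := by rw [← ha, ← hmk]; ring
    rw [← mul_div_assoc, div_eq_iff h2mk]
    exact key
  -- pull back to ℤ and use cyclicity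
  set H : AddSubgroup ℤ := G.comap (zmultiplesHom ℝ u) with hH
  obtain ⟨d, hd⟩ := Int.subgroup_cyclic H
  -- each v i corresponds to an integer b i ∈ H
  have hb : ∀ i, ∃ b : ℤ, (b : ℝ) * u = v i ∧ b ∈ H := by
    intro i
    have hvi : v i ∈ G := by
      rw [hG]; exact AddSubgroup.subset_closure ⟨i, rfl⟩
    obtain ⟨b, hb⟩ := AddSubgroup.mem_zmultiples_iff.mp (hGu hvi)
    rw [zsmul_eq_mul] at hb
    refine ⟨b, hb, ?_⟩
    rw [hH, AddSubgroup.mem_comap]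
    show (b • u) ∈ G
    rw [zsmul_eq_mul, hb]
    exact hvi
  have hdmem : ∀ b ∈ H, ∃ e : ℤ, e * d = b := by
    intro b hbH
    rw [hd, AddSubgroup.mem_closure_singleton] at hbH
    obtain ⟨e, he⟩ := hbH
    exact ⟨e, by rw [← he]; simp [zsmul_eq_mul]⟩
  -- d ≠ 0
  obtain ⟨bk, hbk, hbkH⟩ := hb k
  have hdne : d ≠ 0 := by
    rintro rfl
    obtain ⟨e, he⟩ := hdmem bk hbkH
    simp at he
    rw [← he] at hbk
    simp at hbk
    exact hk hbk.symm
  -- define p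
  refine ⟨(d : ℝ) * u, ?_, ?_, ?_, ?_⟩
  case _ => exact mul_ne_zero (Int.cast_ne_zero.mpr hdne) hune
  all_goals
    have hpG : (d : ℝ) * u ∈ G := by
      have hdH : d ∈ H := by
        rw [hd]
        exact AddSubgroup.mem_closure_singleton.mpr ⟨1, one_smul _ _⟩
      have := (hH ▸ hdH : d ∈ G.comap (zmultiplesHom ℝ u))
      rw [AddSubgroup.mem_comap] at this
      simpa [zsmul_eq_mul] using this
  · obtain ⟨m, hm⟩ := (hZmem _).mp (hB _ hpG)
    exact ⟨m, hm.symm⟩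
  · obtain ⟨m, hm⟩ := (hZmem _).mp (hC _ hpG)
    exact ⟨m, hm.symm⟩
  · intro i
    obtain ⟨b, hbu, hbH⟩ := hb i
    obtain ⟨e, he⟩ := hdmem b hbH
    refine ⟨e, ?_⟩
    rw [← hbu, ← he]
    push_cast
    field_simp
end

section
/- For any integers $w_0$, $w_i$ ($i=1,\dots,n$) and $w_j$ ($j \neq i$): setting $v_0 = w_0 - 1/2$ and $v = w$, the Chvátal–Gomory rounded coefficients satisfy $\lceil 2 v_i v_j \rceil = 2 w_i w_j$, $\lceil v_i^2 + 2 v_i v_0 \rceil = w_i^2 + 2 w_i w_0 - w_i$, and $\lfloor v_0^2 \rfloor = w_0(w_0 - 1)$. -/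
theorem bh_is_eigen_cg_coeffs (w0 wi wj : ℤ) :
    ⌈2 * (wi : ℝ) * (wj : ℝ)⌉ = 2 * wi * wj ∧
    ⌈(wi : ℝ) ^ 2 + 2 * (wi : ℝ) * ((w0 : ℝ) - 1 / 2)⌉ = wi ^ 2 + 2 * wi * w0 - wi ∧
    ⌊((w0 : ℝ) - 1 / 2) ^ 2⌋ = w0 * (w0 - 1) := by
  refine ⟨?_, ?_, ?_⟩
  · rw [show 2 * (wi : ℝ) * wj = ((2 * wi * wj : ℤ) : ℝ) by push_cast; ring]
    exact Int.ceil_intCast _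
  · rw [show (wi : ℝ) ^ 2 + 2 * wi * ((w0 : ℝ) - 1 / 2) = ((wi ^ 2 + 2 * wi * w0 - wi : ℤ) : ℝ) by push_cast; ring]
    exact Int.ceil_intCast _
  · rw [show ((w0 : ℝ) - 1 / 2) ^ 2 = ((w0 * (w0 - 1) : ℤ) : ℝ) + 1/4 by push_cast; ring]
    rw [add_comm, Int.floor_add_intCast]
    norm_num
end

section
/- There do not exist a real $\lambda > 0$ and reals $\tilde v_0, \tilde v_1, \tilde v_2, \tilde v_3$ satisfying $-2\lambda = 2\tilde v_1 \tilde v_2$, $4\lambda = 2\tilde v_1 \tilde v_3$, $-4\lambda = 2\tilde v_2 \tilde v_3$, $\lambda = \tilde v_1^2 + 2\tilde v_1 \tilde v_0$, $2\lambda = \tilde v_2^2 + 2\tilde v_2 \tilde v_0$, and $3\lambda = \tilde v_3^2 + 2\tilde v_3 \tilde v_0$. -/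
theorem no_F2_representation :
    ¬ ∃ (lam v0 v1 v2 v3 : ℝ),
      0 < lam ∧
      -2 * lam = 2 * v1 * v2 ∧
      4 * lam = 2 * v1 * v3 ∧
      -4 * lam = 2 * v2 * v3 ∧
      lam = v1 ^ 2 + 2 * v1 * v0 ∧
      2 * lam = v2 ^ 2 + 2 * v2 * v0 ∧
      3 * lam = v3 ^ 2 + 2 * v3 * v0 := by
  rintro ⟨lam, v0, v1, v2, v3, hl, h1, h2, h3, h4, h5, h6⟩
  have hv3 : v3 ≠ 0 := by rintro rfl; nlinarith
  have h12 : v1 ^ 2 = lam := mul_left_cancel₀ hv3 (by nlinarith)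
  have hv1 : v1 ≠ 0 := by rintro rfl; nlinarith
  have h0 : v0 = 0 := by
    have : v1 * v0 = 0 := by nlinarith
    rcases mul_eq_zero.1 this with h | h
    · exact absurd h hv1
    · exact h
  subst h0
  nlinarith [sq_nonneg (v2*v3), sq_nonneg v2, sq_nonneg v3, mul_pos hl hl]
end
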